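/- Second moment ratio condition at ℓ = 0: Let ρ > 0 and assume 1 + ρ ln Γ(0) < 0. For any ρ-admissible scaling L : ℕ → ℕ, in the homogeneous binary MAG model M(n;L_n), writing ξ^{(0)}(u) for the indicator that node u is isolated and S_{L_n}(u) = 0, one has limsup_{n→∞} E[ξ^{(0)}(1) ξ^{(0)}(2)] / (E[ξ^{(0)}(1)])² ≤ 1. -/

import Mathlib

open MeasureTheory Filter

/-- Bernoulli measure on `Bool` with parameter `p` = probability of `true`. -/
noncomputable def bern (p : ℝ) : Measure Bool :=
  (Real.toNNReal p) • Measure.dirac true + (Real.toNNReal (1 - p)) • Measure.dirac false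

/-- Uniform distribution on `[0,1]`. -/
noncomputable def unif01 : Measure ℝ := MeasureTheory.volume.restrict (Set.Icc (0:ℝ) 1)

/-- The probability space of the homogeneous binary MAG model `M(n;L)`:
i.i.d. Bernoulli attribute bits and, independently, i.i.d. Uniform(0,1) variables. -/
noncomputable def magMeasure (n L : ℕ) (p : ℝ) :
    Measure ((Fin n → Fin L → Bool) × (Fin n × Fin n → ℝ)) :=
  (Measure.pi fun _ : Fin n => Measure.pi fun _ : Fin L => bern p).prod
    (Measure.pi fun _ : Fin n × Fin n => unif01)

/-- `Q_L(a,b) = ∏_{ℓ} q(a_ℓ, b_ℓ)`. -/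
def QL {L : ℕ} (q : Bool → Bool → ℝ) (a b : Fin L → Bool) : ℝ :=
  ∏ ℓ : Fin L, q (a ℓ) (b ℓ)

/-- Distinct nodes `u, v` are adjacent iff `U(u,v) ≤ Q_L(A(u),A(v))`, where the uniform
variable attached to the unordered pair `{u,v}` is the one indexed by `(min u v, max u v)`. -/
def Adj {n L : ℕ} (q : Bool → Bool → ℝ)
    (ω : (Fin n → Fin L → Bool) × (Fin n × Fin n → ℝ)) (u v : Fin n) : Prop :=
  u ≠ v ∧ ω.2 (min u v, max u v) ≤ QL q (ω.1 u) (ω.1 v)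

/-- Node `u` is isolated if it is adjacent to no other node. -/
def Isolated {n L : ℕ} (q : Bool → Bool → ℝ)
    (ω : (Fin n → Fin L → Bool) × (Fin n × Fin n → ℝ)) (u : Fin n) : Prop :=
  ∀ v, ¬ Adj q ω u v

/-- `S_L(u)`: the number of attributes exhibited by node `u`. -/
def Scount {n L : ℕ} (ω : (Fin n → Fin L → Bool) × (Fin n × Fin n → ℝ)) (u : Fin n) : ℕ :=
  (Finset.univ.filter fun ℓ : Fin L => ω.1 u ℓ = true).card

open scoped Classical in
/-- `I_n(L)`: the number of isolated nodes. -/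
noncomputable def numIsolated {n L : ℕ} (q : Bool → Bool → ℝ)
    (ω : (Fin n → Fin L → Bool) × (Fin n × Fin n → ℝ)) : ℕ :=
  (Finset.univ.filter fun u : Fin n => Isolated q ω u).card

open scoped Classical in
/-- `I_n^{(k)}(L)`: the number of isolated nodes `u` with `S_L(u) = k`. -/
noncomputable def numIsolatedWith {n L : ℕ} (q : Bool → Bool → ℝ) (k : ℕ)
    (ω : (Fin n → Fin L → Bool) × (Fin n × Fin n → ℝ)) : ℕ :=
  (Finset.univ.filter fun u : Fin n => Isolated q ω u ∧ Scount ω u = k).card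

open scoped Classical in
/-- `ξ^{(k)}(u)`: the indicator that node `u` is isolated and `S_L(u) = k`. -/
noncomputable def xiInd {n L : ℕ} (q : Bool → Bool → ℝ) (k : ℕ)
    (ω : (Fin n → Fin L → Bool) × (Fin n × Fin n → ℝ)) (u : Fin n) : ℝ :=
  if Isolated q ω u ∧ Scount ω u = k then 1 else 0

/-- `Γ(a) = μ(0) q(a,0) + μ(1) q(a,1)`, with `μ(1) = μ1`, `μ(0) = 1 - μ1`. -/
def Gam (μ1 : ℝ) (q : Bool → Bool → ℝ) (a : Bool) : ℝ :=
  (1 - μ1) * q a false + μ1 * q a true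

/-- A scaling `L : ℕ → ℕ` is `ρ`-admissible if `L_n ~ ρ ln n` as `n → ∞`. -/
def Admissible (ρ : ℝ) (L : ℕ → ℕ) : Prop :=
  Asymptotics.IsEquivalent Filter.atTop (fun n => (L n : ℝ)) (fun n => ρ * Real.log n)

/-- `G(ν,μ) = (μ/ν)^ν ((1-μ)/(1-ν))^{1-ν}` (real powers; the conventions at `ν = 0,1`
agree with the continuous extension). -/
noncomputable def Gfun (ν μ : ℝ) : ℝ :=
  (μ / ν) ^ ν * ((1 - μ) / (1 - ν)) ^ (1 - ν)

/-- `Q*_L(a) = E[Q_L(a,A)]`, `A` a vector of `L` i.i.d. Bernoulli(μ1) bits. -/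
noncomputable def Qstar {L : ℕ} (μ1 : ℝ) (q : Bool → Bool → ℝ) (a : Fin L → Bool) : ℝ :=
  ∫ b, QL q a b ∂(Measure.pi fun _ : Fin L => bern μ1)

/-- `Q**_L(a,b) = E[Q_L(a,A) Q_L(b,A)]`. -/
noncomputable def Qstarstar {L : ℕ} (μ1 : ℝ) (q : Bool → Bool → ℝ) (a b : Fin L → Bool) : ℝ :=
  ∫ c, QL q a c * QL q b c ∂(Measure.pi fun _ : Fin L => bern μ1)

/-- `Q̃_L(a,b) = Q*_L(a) + Q*_L(b) − Q**_L(a,b)`. -/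
noncomputable def Qtilde {L : ℕ} (μ1 : ℝ) (q : Bool → Bool → ℝ) (a b : Fin L → Bool) : ℝ :=
  Qstar μ1 q a + Qstar μ1 q b - Qstarstar μ1 q a b


/-!
Conditionally on the attributes, the uniforms of distinct pairs are independent. Hence the
probability that the first `k` nodes carry no attribute and are isolated is
`(1 - μ(1))^{kL} (1 - q(0,0)^L)^{k(k-1)/2} E[(1 - Q_L(0,A))^k]^{n-k}`: each of the remaining
`n - k` nodes must avoid all of the first `k`. With `Γ = Γ(0)` and
`Γ₂ = μ(0) q(0,0)² + μ(1) q(0,1)² ≤ Γ`, the cases `k = 1, 2` give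
`E[ξ(1)] = (1 - μ(1))^L (1 - Γ^L)^{n-1}` and
`E[ξ(1)ξ(2)] ≤ (1 - μ(1))^{2L} ((1 - Γ^L)² + Γ₂^L)^{n-2}`, so the ratio is at most
`exp(n Γ₂^L / (1 - Γ^L)²) / (1 - Γ^L)²`. Since `L ~ ρ ln n` and `1 + ρ ln Γ₂ < 0`,
`n Γ₂^L = exp((1 + ρ ln Γ₂ + o(1)) ln n) → 0` and `Γ^L → 0`, so this bound tends to `1`.
-/

lemma isProbabilityMeasure_bern {p : ℝ} (h0 : 0 ≤ p) (h1 : p ≤ 1) :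
    IsProbabilityMeasure (bern p) := by
  constructor
  simp only [bern, Measure.coe_add, Measure.coe_smul, Pi.add_apply, Pi.smul_apply, measure_univ,
    ENNReal.smul_def, smul_eq_mul, mul_one]
  rw [← ENNReal.coe_add, ← Real.toNNReal_add h0 (sub_nonneg.2 h1)]
  simp

lemma integral_bern {p : ℝ} (h0 : 0 ≤ p) (h1 : p ≤ 1) (g : Bool → ℝ) :
    ∫ b, g b ∂bern p = (1 - p) * g false + p * g true := by
  simp only [bern, Integrable.of_finite, integral_add_measure, integral_smul_nnreal_measure,
    integral_dirac, NNReal.smul_def, Real.coe_toNNReal', h0, sup_of_le_left, smul_eq_mul,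
    sub_nonneg.2 h1]
  ring

instance : IsProbabilityMeasure unif01 := by
  constructor
  simp [unif01, Real.volume_Icc]

lemma integral_unif01_indicator_lt {c : ℝ} (h0 : 0 ≤ c) (h1 : c ≤ 1) :
    ∫ x, (if c < x then (1 : ℝ) else 0) ∂unif01 = 1 - c := by
  have hset : Set.Ioi c ∩ Set.Icc 0 1 = Set.Ioc c 1 := by
    ext x
    simp only [Set.mem_inter_iff, Set.mem_Ioi, Set.mem_Icc, Set.mem_Ioc]
    exact ⟨fun ⟨h, _, h2⟩ => ⟨h, h2⟩, fun ⟨h, h2⟩ => ⟨h, h0.trans h.le, h2⟩⟩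
  have hind : (fun x => if c < x then (1 : ℝ) else 0) = (Set.Ioi c).indicator 1 := by
    ext x; simp [Set.indicator]
  rw [hind, integral_indicator_one measurableSet_Ioi, unif01, measureReal_def,
    Measure.restrict_apply measurableSet_Ioi, hset, Real.volume_Ioc,
    ENNReal.toReal_ofReal (by linarith)]

lemma integral_pi_finset_prod {ι E : Type*} [Fintype ι] [MeasurableSpace E] (μ : Measure E)
    [IsProbabilityMeasure μ] (s : Finset ι) (f : ι → E → ℝ) :
    ∫ x, ∏ i ∈ s, f i (x i) ∂(Measure.pi fun _ => μ) = ∏ i ∈ s, ∫ t, f i t ∂μ := by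
  classical
  have h := integral_fintype_prod_eq_prod (μ := fun _ => μ)
    (fun i t => if i ∈ s then f i t else 1)
  simp only [Finset.prod_ite_mem, Finset.univ_inter] at h
  rw [h, ← Finset.prod_subset s.subset_univ fun i _ hi => by simp [hi]]
  exact Finset.prod_congr rfl fun i hi => by simp [hi]

lemma prod_fin_ite_val_lt {M : Type*} [CommMonoid M] {n k : ℕ} (hk : k ≤ n) (A c E : M) :
    ∏ y : Fin n, (if y.val < k then A * c ^ y.val else E) =
      A ^ k * c ^ k.choose 2 * E ^ (n - k) := by
  rw [Fin.prod_univ_eq_prod_range (fun y => if y < k then A * c ^ y else E),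
    ← Finset.prod_range_mul_prod_Ico _ hk,
    Finset.prod_congr rfl fun y hy => if_pos (Finset.mem_range.1 hy),
    Finset.prod_congr rfl fun y hy => if_neg (Finset.mem_Ico.1 hy).1.not_gt,
    Finset.prod_mul_distrib, Finset.prod_pow_eq_pow_sum, Finset.sum_range_id,
    ← Nat.choose_two_right]
  simp

section Attributes

variable {L : ℕ} {p : ℝ} (q : Bool → Bool → ℝ)

lemma QL_nonneg (hq0 : ∀ a b, 0 ≤ q a b) (a b : Fin L → Bool) : 0 ≤ QL q a b :=
  Finset.prod_nonneg fun _ _ => hq0 _ _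

lemma QL_le_one (hq0 : ∀ a b, 0 ≤ q a b) (hq1 : ∀ a b, q a b ≤ 1) (a b : Fin L → Bool) :
    QL q a b ≤ 1 :=
  Finset.prod_le_one (fun _ _ => hq0 _ _) fun _ _ => hq1 _ _

lemma QL_pow (a b : Fin L → Bool) (k : ℕ) : QL q a b ^ k = QL (fun x y => q x y ^ k) a b :=
  (Finset.prod_pow _ _ _).symm

lemma QL_const (x y : Bool) : QL q (fun _ => x) (fun _ : Fin L => y) = q x y ^ L := by
  simp [QL]

lemma integral_QL (h0 : 0 ≤ p) (h1 : p ≤ 1) (a : Fin L → Bool) :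
    ∫ b, QL q a b ∂(Measure.pi fun _ => bern p) = ∏ ℓ, Gam p q (a ℓ) := by
  have := isProbabilityMeasure_bern h0 h1
  simp only [QL]
  rw [integral_fintype_prod_eq_prod (fun ℓ t => q (a ℓ) t)]
  simp only [integral_bern h0 h1, Gam]

lemma integral_QL_const (h0 : 0 ≤ p) (h1 : p ≤ 1) (x : Bool) :
    ∫ b, QL q (fun _ => x) b ∂(Measure.pi fun _ : Fin L => bern p) = Gam p q x ^ L := by
  rw [integral_QL q h0 h1, Finset.prod_const, Finset.card_univ, Fintype.card_fin]

lemma integral_one_sub_QL_const (h0 : 0 ≤ p) (h1 : p ≤ 1) (x : Bool) :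
    ∫ b, (1 - QL q (fun _ => x) b) ∂(Measure.pi fun _ : Fin L => bern p) = 1 - Gam p q x ^ L := by
  have := isProbabilityMeasure_bern h0 h1
  rw [integral_sub (integrable_const 1) Integrable.of_finite, integral_QL_const q h0 h1]
  simp

lemma integral_one_sub_QL_const_sq (h0 : 0 ≤ p) (h1 : p ≤ 1) (x : Bool) :
    ∫ b, (1 - QL q (fun _ => x) b) ^ 2 ∂(Measure.pi fun _ : Fin L => bern p) =
      1 - 2 * Gam p q x ^ L + Gam p (fun x y => q x y ^ 2) x ^ L := by
  have := isProbabilityMeasure_bern h0 h1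
  have hexpand : ∀ b : Fin L → Bool, (1 - QL q (fun _ => x) b) ^ 2 =
      1 - 2 * QL q (fun _ => x) b + QL (fun x y => q x y ^ 2) (fun _ => x) b := by
    intro b
    rw [← QL_pow]
    ring
  simp_rw [hexpand]
  rw [integral_add Integrable.of_finite Integrable.of_finite,
    integral_sub (integrable_const 1) Integrable.of_finite, integral_const_mul,
    integral_QL_const q h0 h1, integral_QL_const _ h0 h1]
  simp

lemma integral_indicator_eq_const (h0 : 0 ≤ p) (h1 : p ≤ 1) (x : Bool) :
    ∫ b, (if b = (fun _ => x) then (1 : ℝ) else 0) ∂(Measure.pi fun _ : Fin L => bern p)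
      = (if x then p else 1 - p) ^ L := by
  have := isProbabilityMeasure_bern h0 h1
  have hprod : ∀ b : Fin L → Bool, (if b = (fun _ => x) then (1 : ℝ) else 0)
      = ∏ ℓ, if b ℓ = x then (1 : ℝ) else 0 := by
    intro b
    simp only [Fintype.prod_boole, funext_iff]
    congr
  simp_rw [hprod]
  rw [integral_fintype_prod_eq_pow (fun t => if t = x then (1 : ℝ) else 0), integral_bern h0 h1,
    Fintype.card_fin]
  cases x <;> simp

end Attributes

section Gam

variable {p : ℝ} {q : Bool → Bool → ℝ} {a : Bool}

lemma Gam_pos (h0 : 0 < p) (h1 : p < 1) (hq : ∀ b, 0 < q a b) : 0 < Gam p q a :=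
  add_pos (mul_pos (sub_pos.2 h1) (hq _)) (mul_pos h0 (hq _))

lemma Gam_sq_le (h0 : 0 ≤ p) (h1 : p ≤ 1) (hq0 : ∀ b, 0 ≤ q a b) (hq1 : ∀ b, q a b ≤ 1) :
    Gam p (fun x y => q x y ^ 2) a ≤ Gam p q a :=
  add_le_add
    (mul_le_mul_of_nonneg_left (pow_le_of_le_one (hq0 _) (hq1 _) two_ne_zero) (sub_nonneg.2 h1))
    (mul_le_mul_of_nonneg_left (pow_le_of_le_one (hq0 _) (hq1 _) two_ne_zero) h0)

end Gam

abbrev MagSample (n L : ℕ) : Type := (Fin n → Fin L → Bool) × (Fin n × Fin n → ℝ)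

lemma integral_magMeasure_mul_prod_indicator_lt {n L : ℕ} {p : ℝ} (h0 : 0 ≤ p) (h1 : p ≤ 1)
    (F : (Fin n → Fin L → Bool) → ℝ) (s : Finset (Fin n × Fin n))
    (c : (Fin n → Fin L → Bool) → Fin n × Fin n → ℝ) (hc : ∀ a i, c a i ∈ Set.Icc (0 : ℝ) 1) :
    ∫ ω, F ω.1 * ∏ i ∈ s, (if c ω.1 i < ω.2 i then (1 : ℝ) else 0) ∂magMeasure n L p =
      ∫ a, F a * ∏ i ∈ s, (1 - c a i)
        ∂(Measure.pi fun _ : Fin n => Measure.pi fun _ : Fin L => bern p) := by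
  have := isProbabilityMeasure_bern h0 h1
  have hmeas : Measurable fun ω : MagSample n L =>
      F ω.1 * ∏ i ∈ s, (if c ω.1 i < ω.2 i then (1 : ℝ) else 0) :=
    measurable_from_prod_countable_right fun a => by
      show Measurable fun x : Fin n × Fin n → ℝ =>
        F a * ∏ i ∈ s, (if c a i < x i then (1 : ℝ) else 0)
      refine Measurable.const_mul (Finset.measurable_prod _ fun i _ => ?_) _
      exact Measurable.ite (measurableSet_lt measurable_const (measurable_pi_apply i))
        measurable_const measurable_const
  have hint : Integrable (fun ω : MagSample n L =>
      F ω.1 * ∏ i ∈ s, (if c ω.1 i < ω.2 i then (1 : ℝ) else 0)) (magMeasure n L p) := by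
    refine ((Integrable.of_finite (f := F)
        (μ := Measure.pi fun _ => Measure.pi fun _ => bern p)).comp_fst _).norm.mono'
      hmeas.aestronglyMeasurable (ae_of_all _ fun ω => ?_)
    rw [norm_mul, norm_prod]
    refine mul_le_of_le_one_right (norm_nonneg _)
      (Finset.prod_le_one (fun _ _ => norm_nonneg _) fun i _ => ?_)
    split_ifs <;> simp
  rw [magMeasure, integral_prod _ hint]
  refine integral_congr_ae (ae_of_all _ fun a => ?_)
  dsimp only
  rw [integral_const_mul, integral_pi_finset_prod unif01 s fun i t => if c a i < t then 1 else 0]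
  exact congrArg (F a * ·) <| Finset.prod_congr rfl fun i _ =>
    integral_unif01_indicator_lt (hc a i).1 (hc a i).2

def firstNodes (n k : ℕ) : Finset (Fin n) := Finset.univ.filter fun u => u.val < k

/-- The unordered pairs meeting `firstNodes n k`, each as `(x, y)` with `x < y`: the index of
its uniform in `Adj`. -/
def pairsMeetingFirst (n k : ℕ) : Finset (Fin n × Fin n) :=
  Finset.univ.filter fun i => i.1 < i.2 ∧ i.1.val < k

def condProbFirstIsolated {n L : ℕ} (q : Bool → Bool → ℝ) (k : ℕ)
    (a : Fin n → Fin L → Bool) : ℝ :=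
  (∏ u ∈ firstNodes n k, if a u = (fun _ => false) then (1 : ℝ) else 0) *
    ∏ i ∈ pairsMeetingFirst n k, (1 - QL q (a i.1) (a i.2))

section FirstNodes

open scoped Classical

variable {n L : ℕ} {q : Bool → Bool → ℝ} {k : ℕ}

lemma scount_eq_zero_iff (ω : MagSample n L) (u : Fin n) :
    Scount ω u = 0 ↔ ω.1 u = fun _ => false := by
  simp [Scount, Finset.filter_eq_empty_iff, funext_iff]

lemma forall_firstNodes_isolated_iff (ω : MagSample n L)
    (h : ∀ u ∈ firstNodes n k, ω.1 u = fun _ => false) :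
    (∀ u ∈ firstNodes n k, Isolated q ω u) ↔
      ∀ i ∈ pairsMeetingFirst n k, QL q (ω.1 i.1) (ω.1 i.2) < ω.2 i := by
  simp only [firstNodes, pairsMeetingFirst, Finset.mem_filter, Finset.mem_univ, true_and] at h ⊢
  constructor
  · rintro hiso ⟨x, y⟩ ⟨hxy, hx⟩
    simpa [Adj, hxy.ne, min_eq_left hxy.le, max_eq_right hxy.le] using hiso x hx y
  · rintro hpairs u hu v ⟨huv, hle⟩
    rcases huv.lt_or_gt with huv | hvu
    · rw [min_eq_left huv.le, max_eq_right huv.le] at hle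
      exact (hpairs (u, v) ⟨huv, hu⟩).not_ge hle
    · have hv : v.val < k := lt_trans hvu hu
      have hlt := hpairs (v, u) ⟨hvu, hv⟩
      rw [min_eq_right hvu.le, max_eq_left hvu.le] at hle
      -- both endpoints carry no attribute, so the order of the arguments of `QL` is irrelevant
      simp only [h u hu, h v hv] at hle hlt
      exact hlt.not_ge hle

lemma prod_xiInd_zero_eq (ω : MagSample n L) :
    ∏ u ∈ firstNodes n k, xiInd q 0 ω u =
      (∏ u ∈ firstNodes n k, if ω.1 u = (fun _ => false) then (1 : ℝ) else 0) *
        ∏ i ∈ pairsMeetingFirst n k,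
          if QL q (ω.1 i.1) (ω.1 i.2) < ω.2 i then (1 : ℝ) else 0 := by
  simp only [xiInd, Finset.prod_boole, scount_eq_zero_iff]
  by_cases h : ∀ u ∈ firstNodes n k, ω.1 u = fun _ => false
  · rw [if_pos h, one_mul]
    have hiff : (∀ u ∈ firstNodes n k, Isolated q ω u ∧ ω.1 u = fun _ => false) ↔
        ∀ u ∈ firstNodes n k, Isolated q ω u := by
      simp +contextual [h]
    simp only [hiff, forall_firstNodes_isolated_iff ω h]
    congr
  · rw [if_neg h, zero_mul, if_neg]
    exact fun hall => h fun u hu => (hall u hu).2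

lemma card_filter_lt_and_val_lt (y : Fin n) :
    (Finset.univ.filter fun x : Fin n => x < y ∧ x.val < k).card = min y.val k := by
  have hfilter : (Finset.univ.filter fun x : Fin n => x < y ∧ x.val < k) =
      Finset.univ.filter fun x : Fin n => x.val < min y.val k := by
    ext x
    simp [← Fin.val_fin_lt]
  rw [hfilter, Fin.card_filter_val_lt]
  exact min_eq_right (min_le_left _ _ |>.trans y.isLt.le)

lemma condProbFirstIsolated_eq_prod (a : Fin n → Fin L → Bool) :
    condProbFirstIsolated q k a =
      ∏ y, (if y.val < k then (if a y = (fun _ => false) then (1 : ℝ) else 0) else 1) *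
        (1 - QL q (fun _ => false) (a y)) ^ min y.val k := by
  rw [condProbFirstIsolated, Finset.prod_mul_distrib, ← Finset.prod_filter]
  by_cases h : ∀ u ∈ firstNodes n k, a u = fun _ => false
  · congr 1
    -- the factor of `(x, y)` now depends on `y` only, and `y` lies in `min y k` such pairs
    calc ∏ i ∈ pairsMeetingFirst n k, (1 - QL q (a i.1) (a i.2))
        = ∏ i ∈ pairsMeetingFirst n k, (1 - QL q (fun _ => false) (a i.2)) := by
          refine Finset.prod_congr rfl fun i hi => ?_
          simp only [pairsMeetingFirst, Finset.mem_filter] at hi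
          rw [h i.1 (by simp [firstNodes, hi.2.2])]
      _ = ∏ y, ∏ x ∈ Finset.univ.filter fun x : Fin n => x < y ∧ x.val < k,
            (1 - QL q (fun _ => false) (a y)) := by
          simp only [pairsMeetingFirst, Finset.prod_filter]
          exact Fintype.prod_prod_type_right _
      _ = _ := by simp only [Finset.prod_const, card_filter_lt_and_val_lt]
  · rw [show (Finset.univ.filter fun u : Fin n => u.val < k) = firstNodes n k from rfl,
      Finset.prod_boole, if_neg h, zero_mul, zero_mul]

lemma integral_condProbFirstIsolated {p : ℝ} (h0 : 0 ≤ p) (h1 : p ≤ 1) (hk : k ≤ n) :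
    ∫ a, condProbFirstIsolated q k a
      ∂(Measure.pi fun _ : Fin n => Measure.pi fun _ : Fin L => bern p) =
      ((1 - p) ^ L) ^ k * (1 - q false false ^ L) ^ k.choose 2 *
        (∫ b, (1 - QL q (fun _ => false) b) ^ k
          ∂(Measure.pi fun _ : Fin L => bern p)) ^ (n - k) := by
  have := isProbabilityMeasure_bern h0 h1
  simp_rw [condProbFirstIsolated_eq_prod]
  rw [integral_fintype_prod_eq_prod (fun (y : Fin n) (b : Fin L → Bool) =>
      (if y.val < k then (if b = (fun _ => false) then (1 : ℝ) else 0) else 1) *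
        (1 - QL q (fun _ => false) b) ^ min y.val k), ← prod_fin_ite_val_lt hk]
  refine Finset.prod_congr rfl fun y _ => ?_
  split_ifs with hy
  · have hsupp : ∀ b : Fin L → Bool,
        (if b = (fun _ => false) then (1 : ℝ) else 0) * (1 - QL q (fun _ => false) b) ^ min y.val k
          = (if b = (fun _ => false) then (1 : ℝ) else 0) * (1 - q false false ^ L) ^ y.val := by
      intro b
      split_ifs with hb
      · rw [hb, QL_const, min_eq_left hy.le]
      · simp
    simp_rw [hsupp]
    rw [integral_mul_const, integral_indicator_eq_const h0 h1]
    rfl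
  · simp [min_eq_right (not_lt.1 hy)]

theorem integral_prod_xiInd_zero_firstNodes {p : ℝ} (h0 : 0 ≤ p) (h1 : p ≤ 1)
    (hq0 : ∀ a b, 0 ≤ q a b) (hq1 : ∀ a b, q a b ≤ 1) (hk : k ≤ n) :
    ∫ ω, ∏ u ∈ firstNodes n k, xiInd q 0 ω u ∂magMeasure n L p =
      ((1 - p) ^ L) ^ k * (1 - q false false ^ L) ^ k.choose 2 *
        (∫ b, (1 - QL q (fun _ => false) b) ^ k
          ∂(Measure.pi fun _ : Fin L => bern p)) ^ (n - k) := by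
  simp_rw [prod_xiInd_zero_eq]
  rw [integral_magMeasure_mul_prod_indicator_lt h0 h1
    (fun a => ∏ u ∈ firstNodes n k, if a u = (fun _ => false) then (1 : ℝ) else 0) _
    (fun a i => QL q (a i.1) (a i.2)) fun a i => ⟨QL_nonneg q hq0 _ _, QL_le_one q hq0 hq1 _ _⟩]
  exact integral_condProbFirstIsolated h0 h1 hk

end FirstNodes

lemma firstNodes_one (n : ℕ) : firstNodes (n + 1) 1 = {0} := by
  ext u
  simp only [firstNodes, Finset.mem_filter, Finset.mem_univ, true_and, Finset.mem_singleton,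
    Fin.ext_iff, Fin.val_zero]
  omega

lemma firstNodes_two (n : ℕ) : firstNodes (n + 2) 2 = {0, 1} := by
  ext u
  simp only [firstNodes, Finset.mem_filter, Finset.mem_univ, true_and, Finset.mem_insert,
    Finset.mem_singleton, Fin.ext_iff, Fin.val_zero, Fin.val_one]
  omega

section TwoNodes

variable {p : ℝ} {q : Bool → Bool → ℝ}

lemma integral_xiInd_zero (h0 : 0 ≤ p) (h1 : p ≤ 1) (hq0 : ∀ a b, 0 ≤ q a b)
    (hq1 : ∀ a b, q a b ≤ 1) (n L : ℕ) :
    ∫ ω, xiInd q 0 ω (0 : Fin (n + 2)) ∂magMeasure (n + 2) L p =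
      (1 - p) ^ L * (1 - Gam p q false ^ L) ^ (n + 1) := by
  have h := integral_prod_xiInd_zero_firstNodes (n := n + 2) (L := L) (k := 1) h0 h1 hq0 hq1
    (by omega)
  simp only [firstNodes_one, Finset.prod_singleton, pow_one, integral_one_sub_QL_const q h0 h1]
    at h
  simpa using h

lemma integral_xiInd_zero_mul_xiInd_zero (h0 : 0 ≤ p) (h1 : p ≤ 1) (hq0 : ∀ a b, 0 ≤ q a b)
    (hq1 : ∀ a b, q a b ≤ 1) (n L : ℕ) :
    ∫ ω, xiInd q 0 ω (0 : Fin (n + 2)) * xiInd q 0 ω 1 ∂magMeasure (n + 2) L p =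
      ((1 - p) ^ L) ^ 2 * (1 - q false false ^ L) *
        (∫ b, (1 - QL q (fun _ => false) b) ^ 2 ∂(Measure.pi fun _ : Fin L => bern p)) ^ n := by
  have h := integral_prod_xiInd_zero_firstNodes (n := n + 2) (L := L) (k := 2) h0 h1 hq0 hq1
    le_add_self
  simp only [firstNodes_two, Finset.prod_pair (show (0 : Fin (n + 2)) ≠ 1 by simp)] at h
  simpa using h

end TwoNodes

lemma mul_pow_div_sq_le_exp {A c γ δ E : ℝ} (n : ℕ) (hA : 0 < A) (hc : c ≤ 1) (hγ : γ < 1)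
    (hE0 : 0 ≤ E) (hE : E ≤ (1 - γ) ^ 2 + δ) :
    A ^ 2 * c * E ^ n / (A * (1 - γ) ^ (n + 1)) ^ 2 ≤
      Real.exp (n * δ / (1 - γ) ^ 2) / (1 - γ) ^ 2 := by
  set D := (1 - γ) ^ 2 with hD
  have hDpos : 0 < D := by positivity
  have hED : E ≤ D * Real.exp (δ / D) :=
    calc E ≤ D * (δ / D + 1) := by rw [mul_add, mul_div_cancel₀ _ hDpos.ne']; linarith
      _ ≤ D * Real.exp (δ / D) := by gcongr; exact Real.add_one_le_exp _
  calc A ^ 2 * c * E ^ n / (A * (1 - γ) ^ (n + 1)) ^ 2 = c * E ^ n / D ^ (n + 1) := by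
        rw [hD, ← pow_mul, mul_pow, ← pow_mul]
        field_simp
        ring
    _ ≤ E ^ n / D ^ (n + 1) := by
        gcongr
        exact mul_le_of_le_one_left (pow_nonneg hE0 n) hc
    _ ≤ (D * Real.exp (δ / D)) ^ n / D ^ (n + 1) := by gcongr
    _ = Real.exp (n * δ / D) / D := by
        rw [mul_pow, ← Real.exp_nat_mul, pow_succ]
        field_simp

lemma second_moment_ratio_le {p : ℝ} (h0 : 0 ≤ p) (h1 : p < 1) {q : Bool → Bool → ℝ}
    (hq0 : ∀ a b, 0 ≤ q a b) (hq1 : ∀ a b, q a b ≤ 1) (n L : ℕ) (hΓ : Gam p q false ^ L < 1) :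
    (∫ ω, xiInd q 0 ω (0 : Fin (n + 2)) * xiInd q 0 ω 1 ∂magMeasure (n + 2) L p) /
        (∫ ω, xiInd q 0 ω (0 : Fin (n + 2)) ∂magMeasure (n + 2) L p) ^ 2 ≤
      Real.exp (n * Gam p (fun x y => q x y ^ 2) false ^ L / (1 - Gam p q false ^ L) ^ 2) /
        (1 - Gam p q false ^ L) ^ 2 := by
  rw [integral_xiInd_zero_mul_xiInd_zero h0 h1.le hq0 hq1, integral_xiInd_zero h0 h1.le hq0 hq1]
  refine mul_pow_div_sq_le_exp n (pow_pos (sub_pos.2 h1) _)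
    (by linarith [pow_nonneg (hq0 false false) L]) hΓ (integral_nonneg fun _ => sq_nonneg _) ?_
  rw [integral_one_sub_QL_const_sq q h0 h1.le]
  nlinarith [sq_nonneg (Gam p q false ^ L)]

lemma second_moment_ratio_nonneg {p : ℝ} (q : Bool → Bool → ℝ) (n L : ℕ) :
    0 ≤ (∫ ω, xiInd q 0 ω (0 : Fin (n + 2)) * xiInd q 0 ω 1 ∂magMeasure (n + 2) L p) /
        (∫ ω, xiInd q 0 ω (0 : Fin (n + 2)) ∂magMeasure (n + 2) L p) ^ 2 :=
  div_nonneg (integral_nonneg fun ω => by simp only [xiInd]; split_ifs <;> norm_num) (sq_nonneg _)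

lemma tendsto_mul_pow_of_admissible {ρ c : ℝ} {L : ℕ → ℕ} (hL : Admissible ρ L) (hc0 : 0 < c)
    (hc : 1 + ρ * Real.log c < 0) :
    Tendsto (fun m : ℕ => (m : ℝ) * c ^ L m) atTop (nhds 0) := by
  set v : ℕ → ℝ := fun m => (1 + ρ * Real.log c) * Real.log m
  have hv : Tendsto v atTop atBot :=
    (Real.tendsto_log_atTop.comp tendsto_natCast_atTop_atTop).const_mul_atTop_of_neg hc
  have hequiv : Asymptotics.IsEquivalent atTop (fun m : ℕ => Real.log m + L m * Real.log c) v := by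
    have hdiff : (fun m : ℕ => Real.log m + L m * Real.log c) - v =
        fun m => Real.log c * ((L m : ℝ) - ρ * Real.log m) := by
      ext m; simp only [v, Pi.sub_apply]; ring
    refine Asymptotics.IsLittleO.isEquivalent ?_
    rw [hdiff]
    refine (hL.isLittleO.const_mul_left _).trans_isBigO ?_
    exact ((Asymptotics.isBigO_refl _ _).const_mul_left ρ).trans
      (Asymptotics.isBigO_self_const_mul hc.ne _ _)
  refine (Real.tendsto_exp_atBot.comp (hequiv.symm.tendsto_atBot hv)).congr' ?_
  filter_upwards [eventually_gt_atTop 0] with m hm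
  rw [Function.comp_apply, Real.exp_add, Real.exp_log (by exact_mod_cast hm),
    Real.exp_nat_mul, Real.exp_log hc0]

lemma tendsto_pow_add_two_of_admissible {ρ c : ℝ} {L : ℕ → ℕ} (hL : Admissible ρ L)
    (hc0 : 0 < c) (hc : 1 + ρ * Real.log c < 0) :
    Tendsto (fun n : ℕ => c ^ L (n + 2)) atTop (nhds 0) ∧
      Tendsto (fun n : ℕ => (n : ℝ) * c ^ L (n + 2)) atTop (nhds 0) := by
  have h := (tendsto_mul_pow_of_admissible hL hc0 hc).comp (tendsto_add_atTop_nat 2)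
  constructor <;> refine squeeze_zero (fun n => by positivity) (fun n => ?_) h
  · exact le_mul_of_one_le_left (by positivity) (by simp; linarith)
  · dsimp only [Function.comp_apply]
    gcongr
    simp

lemma tendsto_exp_mul_div_one_sub_sq {γ δ : ℕ → ℝ} (hγ : Tendsto γ atTop (nhds 0))
    (hδ : Tendsto (fun n => n * δ n) atTop (nhds 0)) :
    Tendsto (fun n => Real.exp (n * δ n / (1 - γ n) ^ 2) / (1 - γ n) ^ 2) atTop (nhds 1) := by
  have hden : Tendsto (fun n => (1 - γ n) ^ 2) atTop (nhds 1) := by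
    simpa using ((tendsto_const_nhds (x := (1 : ℝ))).sub hγ).pow 2
  have h := ((hδ.div hden one_ne_zero).rexp).div hden one_ne_zero
  rwa [zero_div, Real.exp_zero, div_one] at h

theorem mag_second_moment_ratio_ell_zero_general
    (μ1 : ℝ) (hμ1 : 0 < μ1) (hμ1' : μ1 < 1)
    (q : Bool → Bool → ℝ) (hq : ∀ a b, 0 < q a b ∧ q a b < 1)
    (ρ : ℝ) (hρ : 0 < ρ)
    (hΓ0 : 1 + ρ * Real.log (Gam μ1 q false) < 0)
    (L : ℕ → ℕ) (hL : Admissible ρ L) :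
    Filter.limsup
      (fun n =>
        (∫ ω, xiInd q 0 ω (0 : Fin (n + 2)) * xiInd q 0 ω (1 : Fin (n + 2))
            ∂(magMeasure (n + 2) (L (n + 2)) μ1)) /
          (∫ ω, xiInd q 0 ω (0 : Fin (n + 2)) ∂(magMeasure (n + 2) (L (n + 2)) μ1)) ^ 2)
      atTop ≤ 1 := by
  have hq0 : ∀ a b, 0 ≤ q a b := fun a b => (hq a b).1.le
  have hq1 : ∀ a b, q a b ≤ 1 := fun a b => (hq a b).2.le
  set Γ := Gam μ1 q false
  set Γ₂ := Gam μ1 (fun x y => q x y ^ 2) false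
  have hΓ : 0 < Γ := Gam_pos hμ1 hμ1' fun b => (hq _ b).1
  have hΓ₂ : 0 < Γ₂ := Gam_pos hμ1 hμ1' fun b => pow_pos (hq _ b).1 2
  have hΓ₂0 : 1 + ρ * Real.log Γ₂ < 0 := by
    have := Real.log_le_log hΓ₂ (Gam_sq_le hμ1.le hμ1'.le (hq0 false) (hq1 false))
    nlinarith
  obtain ⟨hγ, -⟩ := tendsto_pow_add_two_of_admissible hL hΓ hΓ0
  obtain ⟨-, hnδ⟩ := tendsto_pow_add_two_of_admissible hL hΓ₂ hΓ₂0
  have hB := tendsto_exp_mul_div_one_sub_sq hγ hnδ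
  refine (limsup_le_limsup ?_ (isCoboundedUnder_le_of_le atTop (x := 0) fun n =>
    second_moment_ratio_nonneg q n _) hB.isBoundedUnder_le).trans_eq hB.limsup_eq
  filter_upwards [hγ.eventually_lt_const one_pos] with n hn
  exact second_moment_ratio_le hμ1.le hμ1' hq0 hq1 n _ hn

theorem mag_second_moment_ratio_ell_zero
    (μ1 : ℝ) (hμ1 : 0 < μ1) (hμ1' : μ1 < 1)
    (q : Bool → Bool → ℝ) (hq : ∀ a b, 0 < q a b ∧ q a b < 1)
    (hqsym : q false true = q true false)
    (ρ : ℝ) (hρ : 0 < ρ)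
    (hΓ0 : 1 + ρ * Real.log (Gam μ1 q false) < 0)
    (L : ℕ → ℕ) (hL : Admissible ρ L) :
    Filter.limsup
      (fun n =>
        (∫ ω, xiInd q 0 ω (0 : Fin (n + 2)) * xiInd q 0 ω (1 : Fin (n + 2))
            ∂(magMeasure (n + 2) (L (n + 2)) μ1)) /
          (∫ ω, xiInd q 0 ω (0 : Fin (n + 2)) ∂(magMeasure (n + 2) (L (n + 2)) μ1)) ^ 2)
      atTop ≤ 1 :=
  mag_second_moment_ratio_ell_zero_general μ1 hμ1 hμ1' q hq ρ hρ hΓ0 L hL
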